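/- Define Ψ: ℝ_{>0} → ℝ by Ψ(a) = −Li₂(a) + (1−a)·log(a⁻¹−1) + log a − (1/2)(log a)² + π²/6 for 0 < a < 1, Ψ(1) = 0, and Ψ(a) = Li₂(a⁻¹) − (a−1)·log(1−a⁻¹) + log a − π²/6 for a > 1. Then Ψ is continuous on ℝ_{>0} (in particular Ψ(a) → 0 as a → 1 from either side), Ψ is differentiable at every a ∈ (0,1) ∪ (1,∞), and its derivative there equals Ψ'(a) = (a⁻¹ − 1)·log|a⁻¹ − 1|. -/

import Mathlib

open Real Set

/-- The dilogarithm `Li₂(x) = ∑_{k≥1} x^k / k²`. -/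
noncomputable def Li2 (x : ℝ) : ℝ := ∑' k : ℕ, x ^ (k + 1) / ((k : ℝ) + 1) ^ 2

noncomputable def Ψ (a : ℝ) : ℝ :=
  if a < 1 then
    -Li2 a + (1 - a) * Real.log (a⁻¹ - 1) + Real.log a - (1 / 2) * (Real.log a) ^ 2 + π ^ 2 / 6
  else if a = 1 then 0
  else Li2 a⁻¹ - (a - 1) * Real.log (1 - a⁻¹) + Real.log a - π ^ 2 / 6

/-!
On each side of `1`, the identity `log (a⁻¹ - 1) = log (1 - a) - log a` rewrites `Ψ` as a
combination of `Li₂`, `x log x`, `(1 - x) log (1 - x)` and `log x`. These expressions extend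
continuously to `a = 1` with value `0`, because `Li₂ 1 = ζ(2) = π² / 6` and `x log x → 0`.
Their derivatives follow from `Li₂' x = ∑ xᵏ / (k + 1) = -log (1 - x) / x`, obtained by
differentiating the series of `Li₂` termwise on `|x| < 1`.
-/

lemma hasSum_Li2_one : HasSum (fun k : ℕ => (1 : ℝ) ^ (k + 1) / ((k : ℝ) + 1) ^ 2) (π ^ 2 / 6) := by
  simpa using (hasSum_nat_add_iff' 1).mpr hasSum_zeta_two

lemma Li2_one : Li2 1 = π ^ 2 / 6 :=
  hasSum_Li2_one.tsum_eq

lemma continuousOn_Li2 : ContinuousOn Li2 (Icc (-1) 1) := by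
  refine continuousOn_tsum (fun k => (continuousOn_pow _).div_const _) hasSum_Li2_one.summable
    fun k x hx => ?_
  rw [norm_div, norm_pow, one_pow, norm_of_nonneg (by positivity : (0 : ℝ) ≤ ((k : ℝ) + 1) ^ 2)]
  gcongr
  exact pow_le_one₀ (norm_nonneg x) (abs_le.mpr hx)

lemma continuousWithinAt_Li2_one : ContinuousWithinAt Li2 (Iic 1) 1 :=
  (continuousWithinAt_Icc_iff_Iic (by norm_num)).mp (continuousOn_Li2 1 (by norm_num))

lemma hasDerivAt_Li2 {x : ℝ} (hx : |x| < 1) :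
    HasDerivAt Li2 (∑' k : ℕ, x ^ k / ((k : ℝ) + 1)) x := by
  obtain ⟨r, hxr, hr⟩ := exists_between hx
  have hr0 : 0 < r := (abs_nonneg x).trans_lt hxr
  refine hasDerivAt_tsum_of_isPreconnected (summable_geometric_of_lt_one hr0.le hr)
    isOpen_Ioo isPreconnected_Ioo (g' := fun (k : ℕ) y => y ^ k / ((k : ℝ) + 1)) (y₀ := 0)
    (fun k y _ => ?_) (fun k y hy => ?_) ⟨by linarith, hr0⟩ (by simp) (abs_lt.mp hxr)
  · refine ((hasDerivAt_pow (k + 1) y).div_const (((k : ℝ) + 1) ^ 2)).congr_deriv ?_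
    push_cast
    field_simp
  · have hy : |y| ≤ r := abs_le.mpr ⟨hy.1.le, hy.2.le⟩
    rw [norm_div, norm_pow, norm_of_nonneg (by positivity : (0 : ℝ) ≤ (k : ℝ) + 1)]
    calc ‖y‖ ^ k / ((k : ℝ) + 1) ≤ ‖y‖ ^ k := div_le_self (by positivity) (by simp)
      _ ≤ r ^ k := pow_le_pow_left₀ (norm_nonneg y) hy k

lemma hasDerivAt_Li2_of_ne_zero {x : ℝ} (hx0 : x ≠ 0) (hx : |x| < 1) :
    HasDerivAt Li2 (-Real.log (1 - x) / x) x := by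
  convert hasDerivAt_Li2 hx using 1
  refine (((hasSum_pow_div_log_of_abs_lt_one hx).div_const x).congr_fun fun k => ?_).tsum_eq.symm
  field_simp
  ring

noncomputable def psiLeft (x : ℝ) : ℝ :=
  -Li2 x + (1 - x) * Real.log (1 - x) + x * Real.log x - (1 / 2) * Real.log x ^ 2 + π ^ 2 / 6

noncomputable def psiRight (x : ℝ) : ℝ :=
  Li2 x⁻¹ - (x - 1) * Real.log (x - 1) + x * Real.log x - π ^ 2 / 6

lemma log_inv_sub_one {x : ℝ} (hx0 : x ≠ 0) (hx1 : x ≠ 1) :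
    Real.log (x⁻¹ - 1) = Real.log (1 - x) - Real.log x := by
  rw [← Real.log_div (sub_ne_zero.mpr hx1.symm) hx0]
  field_simp

lemma log_one_sub_inv {x : ℝ} (hx0 : x ≠ 0) (hx1 : x ≠ 1) :
    Real.log (1 - x⁻¹) = Real.log (x - 1) - Real.log x := by
  rw [← neg_sub x⁻¹, Real.log_neg_eq_log, log_inv_sub_one hx0 hx1, ← neg_sub x,
    Real.log_neg_eq_log]

lemma eqOn_Ψ_psiLeft : EqOn Ψ psiLeft (Iic 1) := by
  intro x (hx : x ≤ 1)
  rcases hx.lt_or_eq with hx1 | rfl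
  · rcases eq_or_ne x 0 with rfl | hx0
    · simp [Ψ, psiLeft]
    · rw [Ψ, if_pos hx1, psiLeft, log_inv_sub_one hx0 hx1.ne]
      ring
  · simp [Ψ, psiLeft, Li2_one]

lemma eqOn_Ψ_psiRight : EqOn Ψ psiRight (Ici 1) := by
  intro x (hx : 1 ≤ x)
  rcases hx.lt_or_eq with hx1 | rfl
  · have hx0 : x ≠ 0 := by positivity
    rw [Ψ, if_neg hx1.not_gt, if_neg hx1.ne', psiRight, log_one_sub_inv hx0 hx1.ne']
    ring
  · simp [Ψ, psiRight, Li2_one]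

lemma hasDerivAt_psiLeft {a : ℝ} (ha0 : 0 < a) (ha1 : a < 1) :
    HasDerivAt psiLeft ((a⁻¹ - 1) * Real.log (a⁻¹ - 1)) a := by
  have hLi2 := hasDerivAt_Li2_of_ne_zero ha0.ne' (by rwa [abs_of_pos ha0])
  have hmul := (Real.hasDerivAt_mul_log (sub_ne_zero.mpr ha1.ne')).comp a
    ((hasDerivAt_id a).const_sub 1)
  have hlog := Real.hasDerivAt_log ha0.ne'
  have h := (((hLi2.neg.add hmul).add (Real.hasDerivAt_mul_log ha0.ne')).sub
    ((hlog.pow 2).const_mul (1 / 2))).add_const (π ^ 2 / 6)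
  refine h.congr_deriv ?_
  rw [log_inv_sub_one ha0.ne' ha1.ne]
  field_simp
  ring

lemma hasDerivAt_psiRight {a : ℝ} (ha1 : 1 < a) :
    HasDerivAt psiRight ((a⁻¹ - 1) * Real.log (a⁻¹ - 1)) a := by
  have ha0 : 0 < a := by linarith
  have hLi2 := (hasDerivAt_Li2_of_ne_zero (inv_ne_zero ha0.ne')
    (by rw [abs_of_pos (inv_pos.mpr ha0)]; exact inv_lt_one_of_one_lt₀ ha1)).comp a
    (hasDerivAt_inv ha0.ne')
  have hmul := (Real.hasDerivAt_mul_log (sub_ne_zero.mpr ha1.ne')).comp a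
    ((hasDerivAt_id a).sub_const 1)
  have h := ((hLi2.sub hmul).add (Real.hasDerivAt_mul_log ha0.ne')).sub_const (π ^ 2 / 6)
  refine h.congr_deriv ?_
  rw [← Real.log_neg_eq_log (a⁻¹ - 1), neg_sub a⁻¹, log_one_sub_inv ha0.ne' ha1.ne']
  field_simp
  ring

lemma continuousWithinAt_psiLeft_one : ContinuousWithinAt psiLeft (Iic 1) 1 := by
  have hmul : Continuous fun x : ℝ => (1 - x) * Real.log (1 - x) := by fun_prop
  have hlog := (Real.continuousAt_log one_ne_zero).continuousWithinAt (s := Iic 1)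
  exact (((continuousWithinAt_Li2_one.neg.add hmul.continuousWithinAt).add
    Real.continuous_mul_log.continuousWithinAt).sub ((hlog.pow 2).const_mul _)).add
    continuousWithinAt_const

lemma continuousWithinAt_psiRight_one : ContinuousWithinAt psiRight (Ici 1) 1 := by
  have hLi2 : ContinuousWithinAt (fun x : ℝ => Li2 x⁻¹) (Ici 1) 1 :=
    continuousWithinAt_Li2_one.comp_of_eq (continuousAt_inv₀ one_ne_zero).continuousWithinAt
      (fun x (hx : 1 ≤ x) => inv_le_one_of_one_le₀ hx) inv_one
  have hmul : Continuous fun x : ℝ => (x - 1) * Real.log (x - 1) := by fun_prop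
  exact ((hLi2.sub hmul.continuousWithinAt).add Real.continuous_mul_log.continuousWithinAt).sub
    continuousWithinAt_const

lemma continuousAt_Ψ_one : ContinuousAt Ψ 1 :=
  continuousAt_iff_continuous_left_right.mpr
    ⟨continuousWithinAt_psiLeft_one.congr eqOn_Ψ_psiLeft (eqOn_Ψ_psiLeft self_mem_Iic),
      continuousWithinAt_psiRight_one.congr eqOn_Ψ_psiRight (eqOn_Ψ_psiRight self_mem_Ici)⟩

lemma hasDerivAt_Ψ {a : ℝ} (ha0 : 0 < a) (ha1 : a ≠ 1) :
    HasDerivAt Ψ ((a⁻¹ - 1) * Real.log (a⁻¹ - 1)) a := by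
  rcases ha1.lt_or_gt with h | h
  · exact (hasDerivAt_psiLeft ha0 h).congr_of_eventuallyEq
      (eqOn_Ψ_psiLeft.eventuallyEq_of_mem (Iic_mem_nhds h))
  · exact (hasDerivAt_psiRight h).congr_of_eventuallyEq
      (eqOn_Ψ_psiRight.eventuallyEq_of_mem (Ici_mem_nhds h))

/-- `Ψ` is continuous on `(0,∞)` and differentiable on `(0,1) ∪ (1,∞)` with
derivative `Ψ'(a) = (a⁻¹ − 1)·log|a⁻¹ − 1|`. -/
theorem stmt7 :
    ContinuousOn Ψ (Ioi (0 : ℝ)) ∧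
    ∀ a : ℝ, 0 < a → a ≠ 1 →
      HasDerivAt Ψ ((a⁻¹ - 1) * Real.log |a⁻¹ - 1|) a := by
  refine ⟨fun a ha => ?_, fun a ha ha1 => ?_⟩
  · rcases eq_or_ne a 1 with rfl | ha1
    · exact continuousAt_Ψ_one.continuousWithinAt
    · exact (hasDerivAt_Ψ ha ha1).continuousAt.continuousWithinAt
  · rw [Real.log_abs]
    exact hasDerivAt_Ψ ha ha1
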